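/- arXiv:math-ph/0302015 — 2 statements merged into one kernel-verified Lean document; each statement's English description precedes it below -/
import Mathlib

section
/- Let g be a finite-dimensional Lie algebra with nondegenerate invariant symmetric bilinear form (·|·), x a semisimple element with eigenspace decomposition g = ⊕_j g_j, and f ∈ g_{-1}. Assume ad f : g_{1/2} → g_{-1/2} is a vector-space isomorphism. Then the skew-symmetric bilinear form ⟨a,b⟩ := (f | [a,b]) on g_{1/2} is nondegenerate. -/
/-- If ad f : g_{1/2} → g_{-1/2} is an isomorphism, then the bilinear form
⟨a,b⟩ = (f | [a,b]) on g_{1/2} is nondegenerate. -/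
theorem stmt_3 {g : Type*} [LieRing g] [LieAlgebra ℂ g] [FiniteDimensional ℂ g]
    (B : g →ₗ[ℂ] g →ₗ[ℂ] ℂ)
    (hsymm : ∀ a b, B a b = B b a)
    (hinv : ∀ a b c, B ⁅a, b⁆ c = B a ⁅b, c⁆)
    (hnd : ∀ a, (∀ b, B a b = 0) → a = 0)
    (x f : g)
    (hss : ⨆ μ : ℂ, Module.End.eigenspace (LieAlgebra.ad ℂ g x) μ = ⊤)
    (hf : f ∈ Module.End.eigenspace (LieAlgebra.ad ℂ g x) (-1 : ℂ))
    (hmap : ∀ v ∈ Module.End.eigenspace (LieAlgebra.ad ℂ g x) (1/2 : ℂ),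
        ⁅f, v⁆ ∈ Module.End.eigenspace (LieAlgebra.ad ℂ g x) (-(1/2) : ℂ))
    (hinj : ∀ v ∈ Module.End.eigenspace (LieAlgebra.ad ℂ g x) (1/2 : ℂ),
        ⁅f, v⁆ = 0 → v = 0)
    (hsurj : ∀ w ∈ Module.End.eigenspace (LieAlgebra.ad ℂ g x) (-(1/2) : ℂ),
        ∃ v ∈ Module.End.eigenspace (LieAlgebra.ad ℂ g x) (1/2 : ℂ), ⁅f, v⁆ = w) :
    ∀ a ∈ Module.End.eigenspace (LieAlgebra.ad ℂ g x) (1/2 : ℂ),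
      (∀ b ∈ Module.End.eigenspace (LieAlgebra.ad ℂ g x) (1/2 : ℂ), B f ⁅a, b⁆ = 0) →
        a = 0 := by
  intro a ha h
  -- Key: eigenspaces with eigenvalues not summing to zero pair trivially under B
  have key : ∀ (μ ν : ℂ) (u v : g), u ∈ Module.End.eigenspace (LieAlgebra.ad ℂ g x) μ →
      v ∈ Module.End.eigenspace (LieAlgebra.ad ℂ g x) ν → μ + ν ≠ 0 → B u v = 0 := by
    intro μ ν u v hu hv hμν
    have hu' : ⁅x, u⁆ = μ • u := by
      simpa [LieAlgebra.ad_apply] using Module.End.mem_eigenspace_iff.mp hu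
    have hv' : ⁅x, v⁆ = ν • v := by
      simpa [LieAlgebra.ad_apply] using Module.End.mem_eigenspace_iff.mp hv
    have h1 : B ⁅x, u⁆ v + B u ⁅x, v⁆ = 0 := by
      have h2 : B ⁅u, x⁆ v = B u ⁅x, v⁆ := hinv u x v
      have h3 : ⁅u, x⁆ = -⁅x, u⁆ := by rw [← lie_skew]
      rw [← h2, h3, LinearMap.map_neg]
      simp
    have h4 : (μ + ν) • B u v = 0 := by
      rw [add_smul]
      calc μ • B u v + ν • B u v = B ⁅x, u⁆ v + B u ⁅x, v⁆ := by
            rw [hu', hv']; simp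
        _ = 0 := h1
    rcases smul_eq_zero.mp h4 with h5 | h5
    · exact absurd h5 hμν
    · exact h5
  have hfa := hmap a ha
  have hzero : ∀ b, B ⁅f, a⁆ b = 0 := by
    intro b
    have hb : b ∈ ⨆ μ : ℂ, Module.End.eigenspace (LieAlgebra.ad ℂ g x) μ := by
      rw [hss]; exact Submodule.mem_top
    refine Submodule.iSup_induction _ (motive := fun b => B ⁅f, a⁆ b = 0) hb ?_ ?_ ?_
    · intro μ v hv
      by_cases hμ : μ = 1/2
      · subst hμ
        rw [hinv f a v]
        exact h v hv
      · refine key (-(1/2)) μ _ v hfa hv ?_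
        intro hc
        apply hμ
        linear_combination hc
    · simp
    · intro y z hy hz
      simp [hy, hz]
  have : ⁅f, a⁆ = 0 := hnd _ hzero
  exact hinj a ha this
end

section
/- Let g_0 be the ad x-eigenspace of eigenvalue 0, g_{1/2} that of eigenvalue 1/2, and f ∈ g_{-1} with [x,f] = -f, in a Lie algebra g with invariant symmetric form. Define ⟨a,b⟩ = (f|[a,b]) on g_{1/2}. If v ∈ g_0 satisfies [v,f] = 0, then for all a, b ∈ g_{1/2}: ⟨[v,a], b⟩ = ⟨[v,b], a⟩. -/
theorem lie_lie_sub_lie_lie {L : Type*} [LieRing L] (v a b : L) :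
    ⁅⁅v, a⁆, b⁆ - ⁅⁅v, b⁆, a⁆ = ⁅v, ⁅a, b⁆⁆ := by
  rw [leibniz_lie v a b, ← lie_skew a ⁅v, b⁆, ← sub_eq_add_neg]

theorem LinearMap.apply_lie_lie_sub_apply_lie_lie {R L : Type*} [CommRing R] [LieRing L]
    [Module R L] (B : L →ₗ[R] L →ₗ[R] R) (hinv : ∀ a b c, B ⁅a, b⁆ c = B a ⁅b, c⁆)
    (f v a b : L) :
    B f ⁅⁅v, a⁆, b⁆ - B f ⁅⁅v, b⁆, a⁆ = B ⁅f, v⁆ ⁅a, b⁆ := by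
  rw [← map_sub, lie_lie_sub_lie_lie, hinv]

theorem stmt_4_general {g : Type*} [LieRing g] [LieAlgebra ℂ g]
    (B : g →ₗ[ℂ] g →ₗ[ℂ] ℂ)
    (hinv : ∀ a b c, B ⁅a, b⁆ c = B a ⁅b, c⁆)
    (f : g)
    (v : g)
    (hvf : ⁅v, f⁆ = 0)
    (a b : g) :
    B f ⁅⁅v, a⁆, b⁆ = B f ⁅⁅v, b⁆, a⁆ := by
  have hfv : ⁅f, v⁆ = 0 := by rw [← lie_skew, hvf, neg_zero]
  rw [← sub_eq_zero, B.apply_lie_lie_sub_apply_lie_lie hinv, hfv, map_zero,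
    LinearMap.zero_apply]

/-- For v ∈ g₀ with [v,f] = 0 and a,b ∈ g_{1/2}:
⟨[v,a],b⟩ = ⟨[v,b],a⟩ where ⟨a,b⟩ = (f|[a,b]). -/
theorem stmt_4 {g : Type*} [LieRing g] [LieAlgebra ℂ g]
    (B : g →ₗ[ℂ] g →ₗ[ℂ] ℂ)
    (hsymm : ∀ a b, B a b = B b a)
    (hinv : ∀ a b c, B ⁅a, b⁆ c = B a ⁅b, c⁆)
    (x f : g) (hxf : ⁅x, f⁆ = -f)
    (v : g) (hv0 : v ∈ Module.End.eigenspace (LieAlgebra.ad ℂ g x) (0 : ℂ))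
    (hvf : ⁅v, f⁆ = 0)
    (a b : g)
    (ha : a ∈ Module.End.eigenspace (LieAlgebra.ad ℂ g x) (1/2 : ℂ))
    (hb : b ∈ Module.End.eigenspace (LieAlgebra.ad ℂ g x) (1/2 : ℂ)) :
    B f ⁅⁅v, a⁆, b⁆ = B f ⁅⁅v, b⁆, a⁆ :=
  stmt_4_general B hinv f v hvf a b
end
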